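/- Assume f satisfies (f), D satisfies (D), 0 ≤ ℓ⁻ < ℓ⁺ ≤ 1, c = (f(ℓ⁺)−f(ℓ⁻))/(ℓ⁺−ℓ⁻), g(ρ) = f(ρ) − cρ, and let φ be a profile with I = {ξ : ℓ⁻ < φ(ξ) < ℓ⁺}. Then D(1) = 0 and ℓ⁺ = 1 hold if and only if there exists ν⁺ ∈ ℝ such that I ⊆ (−∞, ν⁺) and φ(ξ) = 1 for all ξ ≥ ν⁺. In that case: lim_{ξ↑ν⁺} φ′(ξ) = ((1−ℓ⁻) f′(1) + f(ℓ⁻)) / ((1−ℓ⁻) D′(1)) if D′(1) < 0, lim_{ξ↑ν⁺} φ′(ξ) = +∞ if D′(1) = 0, and lim_{ξ↑ν⁺} D(φ(ξ)) φ′(ξ) = 0. -/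

import Mathlib

open Set Filter MeasureTheory
open scoped Topology Classical

/-- Assumption (f): `f ∈ C¹([0,1];ℝ)` is nonnegative, strictly concave, `f 0 = f 1 = 0`. -/
def FluxAssumption (f : ℝ → ℝ) : Prop :=
  ContDiffOn ℝ 1 f (Icc 0 1) ∧ StrictConcaveOn ℝ (Icc 0 1) f ∧
  (∀ x ∈ Icc (0:ℝ) 1, 0 ≤ f x) ∧ f 0 = 0 ∧ f 1 = 0

/-- Assumption (D): `D ∈ C¹([0,1];ℝ)` is nonnegative and positive on `(0,1)`. -/
def DiffAssumption (D : ℝ → ℝ) : Prop :=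
  ContDiffOn ℝ 1 D (Icc 0 1) ∧ (∀ x ∈ Icc (0:ℝ) 1, 0 ≤ D x) ∧
  (∀ x ∈ Ioo (0:ℝ) 1, 0 < D x)

/-- The wave speed `c = (f(ℓ⁺) - f(ℓ⁻))/(ℓ⁺ - ℓ⁻)`. -/
noncomputable def waveSpeed (f : ℝ → ℝ) (a b : ℝ) : ℝ := (f b - f a) / (b - a)

/-- The reduced flux `g(ρ) = f(ρ) - c ρ`. -/
noncomputable def redFlux (f : ℝ → ℝ) (a b ρ : ℝ) : ℝ := f ρ - waveSpeed f a b * ρ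

/-- A profile for data `f, D, ℓ⁻ = a, ℓ⁺ = b`: continuous, non-decreasing, with values in
`[a,b]`, limits `a` at `-∞` and `b` at `+∞`, `C²` on `I = {ξ | a < φ ξ < b}` with positive
derivative there, satisfying `D(φ) φ' = g(φ) - g(a)` on `I`. -/
def IsProfile (f D : ℝ → ℝ) (a b : ℝ) (φ : ℝ → ℝ) : Prop :=
  Continuous φ ∧ Monotone φ ∧ (∀ ξ, φ ξ ∈ Icc a b) ∧
  Tendsto φ atBot (𝓝 a) ∧ Tendsto φ atTop (𝓝 b) ∧
  ContDiffOn ℝ 2 φ {ξ | a < φ ξ ∧ φ ξ < b} ∧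
  ∀ ξ, a < φ ξ → φ ξ < b →
    0 < deriv φ ξ ∧ D (φ ξ) * deriv φ ξ = redFlux f a b (φ ξ) - redFlux f a b a

/-!
Once `ℓ⁺ = 1`, the profile equation reads `φ' = G(φ) / D(φ)` on `I`, where `G = g - g(ℓ⁻)`
vanishes at `1` and `G'(1) < 0` by strict concavity of `f`. If `D(1) = 0`, then `G / D` is a
quotient of two slopes at `1`, so it tends to `G'(1) / D'(1) > 0` or to `+∞` as `ρ ↑ 1`: `φ'` stays
bounded below near the top, `φ` reaches `1` in finite time, and the limits of `φ'` at `ν⁺` follow.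
If `D(1) > 0`, then `G(ρ) / D(ρ) ≤ K (1 - ρ)` near `1`, and Grönwall's inequality forbids `1 - φ`
from vanishing at a finite `ξ`. Finally `ℓ⁺ = 1` is forced by `φ → ℓ⁺` at `+∞`.
-/

open Real

/-- `f` minus its chord through `(a, f a)` and `(b, f b)`: the paper's `g - g(ℓ⁻)`. -/
noncomputable def chordGap (f : ℝ → ℝ) (a b ρ : ℝ) : ℝ := redFlux f a b ρ - redFlux f a b a

lemma chordGap_right {f : ℝ → ℝ} {a b : ℝ} (hab : a ≠ b) : chordGap f a b b = 0 := by
  have : b - a ≠ 0 := sub_ne_zero.2 hab.symm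
  simp only [chordGap, redFlux, waveSpeed]
  field_simp
  ring

lemma hasDerivWithinAt_chordGap {f : ℝ → ℝ} {f' x : ℝ} {s : Set ℝ}
    (hf : HasDerivWithinAt f f' s x) (a b : ℝ) :
    HasDerivWithinAt (chordGap f a b) (f' - waveSpeed f a b) s x := by
  unfold chordGap redFlux
  simpa using
    (hf.sub ((hasDerivWithinAt_id x s).const_mul (waveSpeed f a b))).sub_const (redFlux f a b a)

section BoundaryQuotient

variable {u v : ℝ → ℝ} {u' v' b : ℝ}

lemma HasDerivWithinAt.tendsto_slope_nhdsLT (hu : HasDerivWithinAt u u' (Iio b) b) :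
    Tendsto (slope u b) (𝓝[<] b) (𝓝 u') :=
  (hasDerivWithinAt_iff_tendsto_slope' self_notMem_Iio).1 hu

lemma div_eq_slope_div_slope (hu : u b = 0) (hv : v b = 0) {x : ℝ} (hx : x ≠ b) :
    u x / v x = slope u b x / slope v b x := by
  rw [slope_def_field, slope_def_field, hu, hv, sub_zero, sub_zero,
    div_div_div_cancel_right₀ (sub_ne_zero.2 hx)]

lemma eventually_div_eq_slope_div_slope (hu : u b = 0) (hv : v b = 0) :
    ∀ᶠ x in 𝓝[<] b, slope u b x / slope v b x = u x / v x :=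
  eventually_mem_nhdsWithin.mono fun _ hx => (div_eq_slope_div_slope hu hv (ne_of_lt hx)).symm

lemma tendsto_div_nhdsLT (hu : HasDerivWithinAt u u' (Iio b) b)
    (hv : HasDerivWithinAt v v' (Iio b) b) (hu0 : u b = 0) (hv0 : v b = 0) (hv' : v' ≠ 0) :
    Tendsto (fun x => u x / v x) (𝓝[<] b) (𝓝 (u' / v')) :=
  (hu.tendsto_slope_nhdsLT.div hv.tendsto_slope_nhdsLT hv').congr'
    (eventually_div_eq_slope_div_slope hu0 hv0)

lemma tendsto_div_nhdsLT_atTop (hu : HasDerivWithinAt u u' (Iio b) b)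
    (hv : HasDerivWithinAt v 0 (Iio b) b) (hu0 : u b = 0) (hv0 : v b = 0) (hu' : u' < 0)
    (hv_pos : ∀ᶠ x in 𝓝[<] b, 0 < v x) :
    Tendsto (fun x => u x / v x) (𝓝[<] b) atTop := by
  have hslope_v : Tendsto (fun x => -slope v b x) (𝓝[<] b) (𝓝[>] 0) := by
    refine tendsto_nhdsWithin_iff.2 ⟨by simpa using hv.tendsto_slope_nhdsLT.neg, ?_⟩
    filter_upwards [hv_pos, self_mem_nhdsWithin] with x hvx hx
    rw [slope_def_field, hv0, sub_zero, mem_Ioi, neg_pos]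
    exact div_neg_of_pos_of_neg hvx (sub_neg.2 hx)
  refine ((hu.tendsto_slope_nhdsLT.neg.pos_mul_atTop (neg_pos.2 hu')
    (tendsto_inv_nhdsGT_zero.comp hslope_v))).congr' ?_
  filter_upwards [eventually_div_eq_slope_div_slope hu0 hv0] with x hx
  rw [← hx, Function.comp_apply, inv_neg, div_eq_mul_inv]
  ring

lemma exists_pos_eventually_le_div (hu : HasDerivWithinAt u u' (Iio b) b)
    (hv : HasDerivWithinAt v v' (Iio b) b) (hu0 : u b = 0) (hv0 : v b = 0) (hu' : u' < 0)
    (hv_pos : ∀ᶠ x in 𝓝[<] b, 0 < v x) :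
    ∃ δ > 0, ∀ᶠ x in 𝓝[<] b, δ ≤ u x / v x := by
  have hv' : v' ≤ 0 := by
    refine le_of_tendsto hv.tendsto_slope_nhdsLT ?_
    filter_upwards [hv_pos, self_mem_nhdsWithin] with x hvx hx
    rw [slope_def_field, hv0, sub_zero]
    exact div_nonpos_of_nonneg_of_nonpos hvx.le (sub_nonpos.2 (le_of_lt hx))
  rcases hv'.lt_or_eq with hv' | rfl
  · have hpos : 0 < u' / v' := div_pos_of_neg_of_neg hu' hv'
    exact ⟨u' / v' / 2, half_pos hpos, (tendsto_div_nhdsLT hu hv hu0 hv0 hv'.ne).eventually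
      (eventually_ge_nhds (half_lt_self hpos))⟩
  · exact ⟨1, one_pos,
      (tendsto_div_nhdsLT_atTop hu hv hu0 hv0 hu' hv_pos).eventually_ge_atTop 1⟩

lemma exists_eventually_div_le_mul_sub (hu : HasDerivWithinAt u u' (Iio b) b) (hu0 : u b = 0)
    (hv : ContinuousWithinAt v (Iio b) b) (hvb : 0 < v b) :
    ∃ K, ∀ᶠ x in 𝓝[<] b, u x / v x ≤ K * (b - x) := by
  have hlim : Tendsto (fun x => -slope u b x / v x) (𝓝[<] b) (𝓝 (-u' / v b)) :=
    hu.tendsto_slope_nhdsLT.neg.div hv hvb.ne'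
  refine ⟨-u' / v b + 1, ?_⟩
  filter_upwards [hlim.eventually (eventually_le_nhds (lt_add_one _)), self_mem_nhdsWithin]
    with x hK hx
  have hux : u x = -slope u b x * (b - x) := by
    have := sub_smul_slope u b x
    rw [smul_eq_mul, vsub_eq_sub, hu0] at this
    linear_combination -this
  calc u x / v x = -slope u b x / v x * (b - x) := by rw [hux]; ring
    _ ≤ (-u' / v b + 1) * (b - x) :=
      mul_le_mul_of_nonneg_right hK (sub_nonneg.2 (le_of_lt (mem_Iio.1 hx)))

end BoundaryQuotient

lemma le_exp_mul_mul_of_neg_mul_le_deriv {u : ℝ → ℝ} {K a b : ℝ} (hab : a ≤ b)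
    (hu : ContinuousOn u (Icc a b)) (hd : DifferentiableOn ℝ u (Ioo a b))
    (h : ∀ x ∈ Ioo a b, -K * u x ≤ deriv u x) :
    u a ≤ exp (K * (b - a)) * u b := by
  have hderiv : ∀ x ∈ Ioo a b, HasDerivAt (fun x => exp (K * x) * u x)
      (exp (K * x) * (K * u x + deriv u x)) x := fun x hx => by
    have hexp : HasDerivAt (fun x => exp (K * x)) (exp (K * x) * K) x := by
      simpa using ((hasDerivAt_id' x).const_mul K).exp
    have hux := ((hd x hx).differentiableAt (isOpen_Ioo.mem_nhds hx)).hasDerivAt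
    exact (hexp.mul hux).congr_deriv (by ring)
  have hmono : MonotoneOn (fun x => exp (K * x) * u x) (Icc a b) := by
    refine monotoneOn_of_deriv_nonneg (convex_Icc a b) (by fun_prop) ?_ ?_ <;>
      rw [interior_Icc]
    · exact fun x hx => (hderiv x hx).differentiableAt.differentiableWithinAt
    · intro x hx
      rw [(hderiv x hx).deriv]
      exact mul_nonneg (exp_pos _).le (by linarith [h x hx])
  have := hmono (left_mem_Icc.2 hab) (right_mem_Icc.2 hab) hab
  rw [mul_sub, exp_sub, div_mul_eq_mul_div, le_div_iff₀ (exp_pos _)]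
  linarith

lemma ContDiffOn.hasDerivWithinAt_Iio_one {h : ℝ → ℝ} (hh : ContDiffOn ℝ 1 h (Icc 0 1)) :
    HasDerivWithinAt h (derivWithin h (Icc 0 1) 1) (Iio 1) 1 :=
  ((hh.differentiableOn one_ne_zero) 1 (right_mem_Icc.2 zero_le_one)).hasDerivWithinAt
    |>.mono_of_mem_nhdsWithin (Icc_mem_nhdsLT zero_lt_one)

lemma FluxAssumption.derivWithin_lt_waveSpeed {f : ℝ → ℝ} (hf : FluxAssumption f) {a : ℝ}
    (ha : 0 ≤ a) (ha1 : a < 1) : derivWithin f (Icc 0 1) 1 < waveSpeed f a 1 := by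
  rw [waveSpeed, ← slope_def_field]
  exact hf.2.1.derivWithin_lt_slope ⟨ha, ha1.le⟩ (right_mem_Icc.2 zero_le_one) ha1
    ((hf.1.differentiableOn one_ne_zero) 1 (right_mem_Icc.2 zero_le_one))

section Profile

variable {f D φ : ℝ → ℝ} {a b : ℝ}

lemma IsProfile.differentiableAt (hφ : IsProfile f D a b φ) {ξ : ℝ} (ha : a < φ ξ)
    (hb : φ ξ < b) : DifferentiableAt ℝ φ ξ :=
  have hI : IsOpen {ξ | a < φ ξ ∧ φ ξ < b} :=
    (isOpen_lt continuous_const hφ.1).inter (isOpen_lt hφ.1 continuous_const)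
  (hφ.2.2.2.2.2.1.differentiableOn two_ne_zero ξ ⟨ha, hb⟩).differentiableAt
    (hI.mem_nhds ⟨ha, hb⟩)

lemma IsProfile.eq_of_eventually_eq (hφ : IsProfile f D a b φ) {c : ℝ}
    (h : ∀ᶠ ξ in atTop, φ ξ = c) : b = c :=
  tendsto_nhds_unique hφ.2.2.2.2.1 (tendsto_const_nhds.congr' (h.mono fun _ => Eq.symm))

lemma IsProfile.eq_one_of_le (hφ : IsProfile f D a 1 φ) {ν ξ : ℝ} (hν : φ ν = 1)
    (hξ : ν ≤ ξ) : φ ξ = 1 :=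
  le_antisymm (hφ.2.2.1 ξ).2 (hν ▸ hφ.2.1 hξ)

lemma IsProfile.exists_first_eq_one (hφ : IsProfile f D a 1 φ) (ha : a < 1) {ν : ℝ}
    (hν : φ ν = 1) : ∃ ν₁, φ ν₁ = 1 ∧ ∀ ξ < ν₁, φ ξ < 1 := by
  obtain ⟨ξb, hξb⟩ := eventually_atBot.1 (hφ.2.2.2.1.eventually (eventually_lt_nhds ha))
  have hbdd : BddBelow {ξ | φ ξ = 1} :=
    ⟨ξb, fun η hη => not_lt.1 fun hlt => (hξb η hlt.le).ne hη⟩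
  refine ⟨sInf {ξ | φ ξ = 1},
    (isClosed_eq hφ.1 continuous_const).csInf_mem ⟨ν, hν⟩ hbdd, fun ξ hξ => ?_⟩
  exact (hφ.2.2.1 ξ).2.lt_of_ne fun h => (csInf_le hbdd h).not_gt hξ

lemma IsProfile.tendsto_nhdsLT_one (hφ : IsProfile f D a b φ) {ν : ℝ} (hν : φ ν = 1)
    (hlt : ∀ ξ < ν, φ ξ < 1) : Tendsto φ (𝓝[<] ν) (𝓝[<] 1) :=
  hν ▸ hφ.1.continuousWithinAt.tendsto_nhdsWithin fun ξ hξ => hν ▸ hlt ξ hξ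

lemma IsProfile.deriv_eq_div (hφ : IsProfile f D a 1 φ) (hD : ∀ ρ ∈ Ioo a 1, 0 < D ρ)
    {ξ : ℝ} (ha : a < φ ξ) (h1 : φ ξ < 1) :
    deriv φ ξ = chordGap f a 1 (φ ξ) / D (φ ξ) :=
  eq_div_of_mul_eq (hD _ ⟨ha, h1⟩).ne' (by rw [mul_comm]; exact (hφ.2.2.2.2.2.2 ξ ha h1).2)

lemma IsProfile.eventually_deriv_eq_div (hφ : IsProfile f D a 1 φ)
    (hD : ∀ ρ ∈ Ioo a 1, 0 < D ρ) (ha : a < 1) {l : Filter ℝ} (hl : Tendsto φ l (𝓝[<] 1)) :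
    ∀ᶠ ξ in l, a < φ ξ ∧ φ ξ < 1 ∧ deriv φ ξ = chordGap f a 1 (φ ξ) / D (φ ξ) :=
  (hl.eventually (Ioo_mem_nhdsLT ha)).mono fun _ hξ =>
    ⟨hξ.1, hξ.2, hφ.deriv_eq_div hD hξ.1 hξ.2⟩

end Profile

section RightEndpoint

variable {f D φ : ℝ → ℝ} {a : ℝ} {l : Filter ℝ}

lemma DiffAssumption.pos_of_mem_Ioo (hD : DiffAssumption D) (ha : 0 ≤ a) :
    ∀ ρ ∈ Ioo a 1, 0 < D ρ :=
  fun ρ hρ => hD.2.2 ρ ⟨ha.trans_lt hρ.1, hρ.2⟩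

lemma hasDerivWithinAt_chordGap_one (hf : FluxAssumption f) (a : ℝ) :
    HasDerivWithinAt (chordGap f a 1)
      (derivWithin f (Icc 0 1) 1 - waveSpeed f a 1) (Iio 1) 1 :=
  hasDerivWithinAt_chordGap hf.1.hasDerivWithinAt_Iio_one a 1

theorem IsProfile.exists_eq_one (hφ : IsProfile f D a 1 φ) (hf : FluxAssumption f)
    (hD : DiffAssumption D) (ha : 0 ≤ a) (ha1 : a < 1) (hD1 : D 1 = 0) : ∃ ν, φ ν = 1 := by
  obtain ⟨δ, hδ, hδ_le⟩ := exists_pos_eventually_le_div (hasDerivWithinAt_chordGap_one hf a)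
    hD.1.hasDerivWithinAt_Iio_one (chordGap_right ha1.ne) hD1
    (sub_neg.2 (hf.derivWithin_lt_waveSpeed ha ha1))
    (mem_of_superset (Ioo_mem_nhdsLT ha1) (hD.pos_of_mem_Ioo ha))
  by_contra! hne
  have hφ_top : Tendsto φ atTop (𝓝[<] 1) := tendsto_nhdsWithin_iff.2
    ⟨hφ.2.2.2.2.1, .of_forall fun ξ => (hφ.2.2.1 ξ).2.lt_of_ne (hne ξ)⟩
  obtain ⟨ξ₀, hξ₀⟩ := eventually_atTop.1
    ((hφ.eventually_deriv_eq_div (hD.pos_of_mem_Ioo ha) ha1 hφ_top).and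
      (hφ_top.eventually hδ_le))
  -- a derivative `≥ δ` on `[ξ₀, ∞)` lifts `φ` by `1` over a length `1 / δ`
  have hgrowth := Convex.mul_sub_le_image_sub_of_le_deriv (convex_Ici ξ₀) hφ.1.continuousOn
    (fun ξ hξ => by
      obtain ⟨⟨h1, h2, -⟩, -⟩ := hξ₀ ξ (le_of_lt (by simpa using hξ))
      exact (hφ.differentiableAt h1 h2).differentiableWithinAt)
    (fun ξ hξ => by
      obtain ⟨⟨-, -, hderiv⟩, hle⟩ := hξ₀ ξ (le_of_lt (by simpa using hξ))
      exact hderiv ▸ hle)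
    ξ₀ self_mem_Ici (ξ₀ + 1 / δ) (by simp [hδ.le]) (by simp [hδ.le])
  rw [add_sub_cancel_left, mul_one_div_cancel hδ.ne'] at hgrowth
  have := (hξ₀ (ξ₀ + 1 / δ) (by simp [hδ.le])).1.2.1
  linarith [ha.trans (hφ.2.2.1 ξ₀).1]

theorem IsProfile.D_one_eq_zero (hφ : IsProfile f D a 1 φ) (hf : FluxAssumption f)
    (hD : DiffAssumption D) (ha : 0 ≤ a) (ha1 : a < 1) {ν : ℝ} (hν : φ ν = 1) : D 1 = 0 := by
  by_contra hD1
  have hD1_pos : 0 < D 1 := (hD.2.1 1 (right_mem_Icc.2 zero_le_one)).lt_of_ne' hD1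
  obtain ⟨K, hK⟩ := exists_eventually_div_le_mul_sub (hasDerivWithinAt_chordGap_one hf a)
    (chordGap_right ha1.ne) hD.1.hasDerivWithinAt_Iio_one.continuousWithinAt hD1_pos
  obtain ⟨ν₁, hν₁, hlt⟩ := hφ.exists_first_eq_one ha1 hν
  have hφ_left := hφ.tendsto_nhdsLT_one hν₁ hlt
  obtain ⟨l, hl, hIoo⟩ := mem_nhdsLT_iff_exists_Ioo_subset.1
    ((hφ.eventually_deriv_eq_div (hD.pos_of_mem_Ioo ha) ha1 hφ_left).and
      (hφ_left.eventually hK))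
  -- Grönwall for `1 - φ` on `[l, ν₁]`: it vanishes at `ν₁`, hence also at `l`
  have hgronwall := le_exp_mul_mul_of_neg_mul_le_deriv (u := fun ξ => 1 - φ ξ) (K := K)
    (le_of_lt hl) (continuous_const.sub hφ.1).continuousOn
    (fun ξ hξ => by
      obtain ⟨⟨h1, h2, -⟩, -⟩ := hIoo hξ
      exact ((hφ.differentiableAt h1 h2).const_sub 1).differentiableWithinAt)
    (fun ξ hξ => by
      obtain ⟨⟨-, -, hderiv⟩, hle⟩ := hIoo hξ
      rw [deriv_const_sub, hderiv]
      linarith)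
  simp only [hν₁, sub_self, mul_zero] at hgronwall
  linarith [hlt l hl]

lemma IsProfile.tendsto_deriv_of_derivWithin_neg (hφ : IsProfile f D a 1 φ)
    (hf : FluxAssumption f) (hD : DiffAssumption D) (ha : 0 ≤ a) (ha1 : a < 1) (hD1 : D 1 = 0)
    (hl : Tendsto φ l (𝓝[<] 1)) (hD' : derivWithin D (Icc 0 1) 1 < 0) :
    Tendsto (deriv φ) l (𝓝 (((1 - a) * derivWithin f (Icc 0 1) 1 + f a) /
      ((1 - a) * derivWithin D (Icc 0 1) 1))) := by
  have hlimit : (derivWithin f (Icc 0 1) 1 - waveSpeed f a 1) / derivWithin D (Icc 0 1) 1 =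
      ((1 - a) * derivWithin f (Icc 0 1) 1 + f a) / ((1 - a) * derivWithin D (Icc 0 1) 1) := by
    have : 1 - a ≠ 0 := sub_ne_zero.2 ha1.ne'
    rw [waveSpeed, hf.2.2.2.2]
    field_simp
    ring
  rw [← hlimit]
  exact ((tendsto_div_nhdsLT (hasDerivWithinAt_chordGap_one hf a) hD.1.hasDerivWithinAt_Iio_one
    (chordGap_right ha1.ne) hD1 hD'.ne).comp hl).congr'
    ((hφ.eventually_deriv_eq_div (hD.pos_of_mem_Ioo ha) ha1 hl).mono fun _ h => h.2.2.symm)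

lemma IsProfile.tendsto_deriv_atTop_of_derivWithin_eq_zero (hφ : IsProfile f D a 1 φ)
    (hf : FluxAssumption f) (hD : DiffAssumption D) (ha : 0 ≤ a) (ha1 : a < 1) (hD1 : D 1 = 0)
    (hl : Tendsto φ l (𝓝[<] 1)) (hD' : derivWithin D (Icc 0 1) 1 = 0) :
    Tendsto (deriv φ) l atTop :=
  ((tendsto_div_nhdsLT_atTop (hasDerivWithinAt_chordGap_one hf a)
    (hD' ▸ hD.1.hasDerivWithinAt_Iio_one) (chordGap_right ha1.ne) hD1
    (sub_neg.2 (hf.derivWithin_lt_waveSpeed ha ha1))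
    (mem_of_superset (Ioo_mem_nhdsLT ha1) (hD.pos_of_mem_Ioo ha))).comp hl).congr'
    ((hφ.eventually_deriv_eq_div (hD.pos_of_mem_Ioo ha) ha1 hl).mono fun _ h => h.2.2.symm)

lemma IsProfile.tendsto_mul_deriv_zero (hφ : IsProfile f D a 1 φ) (hf : FluxAssumption f)
    (ha1 : a < 1) (hl : Tendsto φ l (𝓝[<] 1)) :
    Tendsto (fun ξ => D (φ ξ) * deriv φ ξ) l (𝓝 0) := by
  have hG : Tendsto (chordGap f a 1) (𝓝[<] 1) (𝓝 0) :=
    chordGap_right (f := f) ha1.ne ▸ (hasDerivWithinAt_chordGap_one hf a).continuousWithinAt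
  refine (hG.comp hl).congr' ((hl.eventually (Ioo_mem_nhdsLT ha1)).mono fun ξ hξ => ?_)
  exact ((hφ.2.2.2.2.2.2 ξ hξ.1 hξ.2).2).symm

end RightEndpoint

theorem stmt2_general (f D : ℝ → ℝ) (hf : FluxAssumption f) (hD : DiffAssumption D)
    (lm lp : ℝ) (h0 : 0 ≤ lm) (hl : lm < lp)
    (φ : ℝ → ℝ) (hφ : IsProfile f D lm lp φ) :
    ((D 1 = 0 ∧ lp = 1) ↔
      ∃ ν : ℝ, {ξ | lm < φ ξ ∧ φ ξ < lp} ⊆ Iio ν ∧ ∀ ξ, ν ≤ ξ → φ ξ = 1) ∧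
    (∀ ν : ℝ, {ξ | lm < φ ξ ∧ φ ξ < lp} ⊆ Iio ν → (∀ ξ, ν ≤ ξ → φ ξ = 1) →
      IsLUB {ξ | lm < φ ξ ∧ φ ξ < lp} ν →
      (derivWithin D (Icc 0 1) 1 < 0 →
        Tendsto (deriv φ) (𝓝[<] ν)
          (𝓝 (((1 - lm) * derivWithin f (Icc 0 1) 1 + f lm) / ((1 - lm) * derivWithin D (Icc 0 1) 1)))) ∧
      (derivWithin D (Icc 0 1) 1 = 0 → Tendsto (deriv φ) (𝓝[<] ν) atTop) ∧
      Tendsto (fun ξ => D (φ ξ) * deriv φ ξ) (𝓝[<] ν) (𝓝 0)) := by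
  have hlp : ∀ ν, (∀ ξ, ν ≤ ξ → φ ξ = 1) → lp = 1 := fun ν hone =>
    hφ.eq_of_eventually_eq (eventually_atTop.2 ⟨ν, hone⟩)
  refine ⟨⟨?_, ?_⟩, fun ν _ hone hlub => ?_⟩
  · rintro ⟨hD1, rfl⟩
    obtain ⟨ν, hν⟩ := hφ.exists_eq_one hf hD h0 hl hD1
    exact ⟨ν, fun ξ hξ => not_le.1 fun hle => (hφ.eq_one_of_le hν hle).not_lt hξ.2,
      fun ξ => hφ.eq_one_of_le hν⟩
  · rintro ⟨ν, -, hone⟩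
    obtain rfl := hlp ν hone
    exact ⟨hφ.D_one_eq_zero hf hD h0 hl (hone ν le_rfl), rfl⟩
  · obtain rfl := hlp ν hone
    have hD1 := hφ.D_one_eq_zero hf hD h0 hl (hone ν le_rfl)
    have hφ_left := hφ.tendsto_nhdsLT_one (hone ν le_rfl) fun ξ hξ => by
      obtain ⟨η, hη, hξη, -⟩ := hlub.exists_between hξ
      exact (hφ.2.1 hξη.le).trans_lt hη.2
    exact ⟨hφ.tendsto_deriv_of_derivWithin_neg hf hD h0 hl hD1 hφ_left,
      hφ.tendsto_deriv_atTop_of_derivWithin_eq_zero hf hD h0 hl hD1 hφ_left,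
      hφ.tendsto_mul_deriv_zero hf hl hφ_left⟩

/-- Characterization of right-degeneracy of profiles and the boundary behaviour of `φ'`
at the finite right endpoint `ν⁺` of `I`. -/
theorem stmt2 (f D : ℝ → ℝ) (hf : FluxAssumption f) (hD : DiffAssumption D)
    (lm lp : ℝ) (h0 : 0 ≤ lm) (hl : lm < lp) (h1 : lp ≤ 1)
    (φ : ℝ → ℝ) (hφ : IsProfile f D lm lp φ) :
    ((D 1 = 0 ∧ lp = 1) ↔
      ∃ ν : ℝ, {ξ | lm < φ ξ ∧ φ ξ < lp} ⊆ Iio ν ∧ ∀ ξ, ν ≤ ξ → φ ξ = 1) ∧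
    (∀ ν : ℝ, {ξ | lm < φ ξ ∧ φ ξ < lp} ⊆ Iio ν → (∀ ξ, ν ≤ ξ → φ ξ = 1) →
      IsLUB {ξ | lm < φ ξ ∧ φ ξ < lp} ν →
      (derivWithin D (Icc 0 1) 1 < 0 →
        Tendsto (deriv φ) (𝓝[<] ν)
          (𝓝 (((1 - lm) * derivWithin f (Icc 0 1) 1 + f lm) / ((1 - lm) * derivWithin D (Icc 0 1) 1)))) ∧
      (derivWithin D (Icc 0 1) 1 = 0 → Tendsto (deriv φ) (𝓝[<] ν) atTop) ∧
      Tendsto (fun ξ => D (φ ξ) * deriv φ ξ) (𝓝[<] ν) (𝓝 0)) :=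
  stmt2_general f D hf hD lm lp h0 hl φ hφ
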